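/- For a polynomial F over a field F and a point a ∈ F^m with mult(F, a) = r < ∞, and any k ∈ N_0^m, the multiplicity of the Hasse derivative F^{(k)} at a is at least r − (k_1 + ... + k_m). -/

import Mathlib

/-- The `k`-th Hasse derivative of a multivariate polynomial `f`: the coefficient of
`T^k` in `f(X + T)`. -/
noncomputable def hasseDeriv {F : Type*} [CommRing F] {m : ℕ} (k : Fin m →₀ ℕ)
    (f : MvPolynomial (Fin m) F) : MvPolynomial (Fin m) F :=
  MvPolynomial.coeff k
    (MvPolynomial.eval₂ (MvPolynomial.C.comp MvPolynomial.C)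
      (fun j => MvPolynomial.X j + MvPolynomial.C (MvPolynomial.X j)) f)

/-- `f` has multiplicity at least `r` at the point `a`: all Hasse derivatives of total
order `< r` vanish at `a`. -/
def HasMultAtLeast {F : Type*} [CommRing F] {m : ℕ} (f : MvPolynomial (Fin m) F)
    (a : Fin m → F) (r : ℕ) : Prop :=
  ∀ k : Fin m →₀ ℕ, (∑ j, k j) < r → MvPolynomial.eval a (hasseDeriv k f) = 0

/-- The multiplicity of `f` at `a`: the largest `r` such that all Hasse derivatives of `f`
of total order `< r` vanish at `a`. -/
noncomputable def multAt {F : Type*} [CommRing F] {m : ℕ} (f : MvPolynomial (Fin m) F)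
    (a : Fin m → F) : ℕ :=
  sSup {r | HasMultAtLeast f a r}

/-!
Writing `binom(n, k) = ∏ⱼ binom(nⱼ, kⱼ)`, the coefficients of a Hasse derivative are
`coeff_u (D_k f) = binom(u + k, k) · coeff_{u + k} f`, by induction on `f` with Pascal's rule
in the step `f ↦ f · Xⱼ`. Comparing coefficients then gives the composition law
`D_l (D_k f) = binom(k + l, k) · D_{k + l} f`. Hence if all derivatives of `f` of order `< r`
vanish at `a` and `|l| < r - |k|`, then `D_l (D_k f)` vanishes at `a` as a multiple of
`D_{k + l} f`, whose order is `< r`.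
-/

open MvPolynomial Finsupp

def multiChoose {m : ℕ} (n k : Fin m →₀ ℕ) : ℕ :=
  ∏ j, (n j).choose (k j)

section multiChoose

variable {m : ℕ}

lemma multiChoose_eq_zero_of_lt {n k : Fin m →₀ ℕ} {j : Fin m} (h : n j < k j) :
    multiChoose n k = 0 :=
  Finset.prod_eq_zero (Finset.mem_univ j) (Nat.choose_eq_zero_of_lt h)

lemma multiChoose_add_single_of_eq_zero (n k : Fin m →₀ ℕ) {j : Fin m} (hk : k j = 0) :
    multiChoose (n + single j 1) k = multiChoose n k := by
  refine Finset.prod_congr rfl fun i _ => ?_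
  rcases eq_or_ne i j with rfl | hij
  · simp [hk]
  · simp [single_eq_of_ne hij]

lemma prod_compl_choose_add_single (n k : Fin m →₀ ℕ) (j : Fin m) (a b : ℕ) :
    ∏ i ∈ {j}ᶜ, ((n + single j a) i).choose ((k + single j b) i)
      = ∏ i ∈ {j}ᶜ, (n i).choose (k i) :=
  Finset.prod_congr rfl fun i hi => by
    have hij : i ≠ j := by simpa using hi
    simp [single_eq_of_ne hij]

lemma multiChoose_add_single_add_single (n k : Fin m →₀ ℕ) (j : Fin m) :
    multiChoose (n + single j 1) (k + single j 1)
      = multiChoose n (k + single j 1) + multiChoose n k := by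
  have h := prod_compl_choose_add_single n k j 1 1
  have h' := prod_compl_choose_add_single n k j 0 1
  simp only [single_zero, add_zero] at h'
  simp only [multiChoose, Fintype.prod_eq_mul_prod_compl j, h, h']
  simp only [Finsupp.add_apply, single_eq_same, Nat.choose_succ_succ']
  ring

lemma multiChoose_add_single (n k : Fin m →₀ ℕ) (j : Fin m) :
    multiChoose (n + single j 1) k
      = multiChoose n k + if k j = 0 then 0 else multiChoose n (k - single j 1) := by
  split_ifs with hk
  · rw [multiChoose_add_single_of_eq_zero n k hk, add_zero]
  · obtain ⟨k', rfl⟩ : ∃ k', k = k' + single j 1 :=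
      ⟨k - single j 1,
        (tsub_add_cancel_of_le (single_le_iff.2 (Nat.one_le_iff_ne_zero.2 hk))).symm⟩
    rw [multiChoose_add_single_add_single, add_tsub_cancel_right]

lemma multiChoose_mul_multiChoose (n k l : Fin m →₀ ℕ) :
    multiChoose n (k + l) * multiChoose (k + l) k = multiChoose n k * multiChoose (n - k) l := by
  simp only [multiChoose, ← Finset.prod_mul_distrib, Finsupp.add_apply, Finsupp.tsub_apply]
  exact Finset.prod_congr rfl fun i _ => by
    rw [Nat.choose_mul (Nat.le_add_right _ _), Nat.add_sub_cancel_left]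

end multiChoose

section hasseDeriv

variable {R : Type*} [CommRing R] {m : ℕ}

lemma hasseDeriv_add (k : Fin m →₀ ℕ) (p q : MvPolynomial (Fin m) R) :
    hasseDeriv k (p + q) = hasseDeriv k p + hasseDeriv k q := by
  simp only [hasseDeriv, eval₂_add, coeff_add]

lemma hasseDeriv_C (k : Fin m →₀ ℕ) (a : R) :
    hasseDeriv k (C a) = if k = 0 then C a else 0 := by
  simp only [hasseDeriv, eval₂_C, RingHom.comp_apply, coeff_C, eq_comm]

lemma hasseDeriv_mul_X (k : Fin m →₀ ℕ) (p : MvPolynomial (Fin m) R) (j : Fin m) :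
    hasseDeriv k (p * X j)
      = hasseDeriv k p * X j + if k j = 0 then 0 else hasseDeriv (k - single j 1) p := by
  simp only [hasseDeriv, eval₂_mul, eval₂_X, mul_add, coeff_add, coeff_mul_X',
    Finsupp.mem_support_iff, mul_comm _ (C _), coeff_C_mul]
  by_cases hk : k j = 0 <;> simp [hk, mul_comm, add_comm]

lemma coeff_hasseDeriv (f : MvPolynomial (Fin m) R) (k u : Fin m →₀ ℕ) :
    coeff u (hasseDeriv k f) = multiChoose (u + k) k * coeff (u + k) f := by
  induction f using MvPolynomial.induction_on generalizing k u with
  | C a =>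
    rw [hasseDeriv_C]
    rcases eq_or_ne k 0 with rfl | hk
    · simp [multiChoose]
    · have huk : u + k ≠ 0 := fun h => hk (add_eq_zero.1 h).2
      simp [hk, coeff_C, Ne.symm huk]
  | add p q hp hq => simp only [hasseDeriv_add, coeff_add, hp, hq, mul_add]
  | mul_X p j ih =>
    rw [hasseDeriv_mul_X, coeff_add]
    by_cases hukj : (u + k) j = 0
    · have hu : u j = 0 := by simp only [Finsupp.add_apply] at hukj; omega
      have hk : k j = 0 := by simp only [Finsupp.add_apply] at hukj; omega
      simp [coeff_mul_X', hu, hk, hukj]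
    obtain ⟨n, hn⟩ : ∃ n, u + k = n + single j 1 :=
      ⟨u + k - single j 1,
        (tsub_add_cancel_of_le (single_le_iff.2 (Nat.one_le_iff_ne_zero.2 hukj))).symm⟩
    have hnj : (u + k) j = n j + 1 := by simp [hn]
    have hfirst : coeff u (hasseDeriv k p * X j) = multiChoose n k * coeff n p := by
      rw [coeff_mul_X']
      split_ifs with hu
      · rw [Finsupp.mem_support_iff] at hu
        have hun : u - single j 1 + k = n := by
          rw [tsub_add_eq_add_tsub (single_le_iff.2 (Nat.one_le_iff_ne_zero.2 hu)), hn,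
            add_tsub_cancel_right]
        rw [ih, hun]
      · rw [Finsupp.notMem_support_iff] at hu
        have hnk : n j < k j := by simp only [Finsupp.add_apply, hu] at hnj; omega
        rw [multiChoose_eq_zero_of_lt hnk, Nat.cast_zero, zero_mul]
    have hsecond : coeff u (if k j = 0 then 0 else hasseDeriv (k - single j 1) p)
        = ((if k j = 0 then 0 else multiChoose n (k - single j 1) : ℕ) : R) * coeff n p := by
      split_ifs with hk
      · simp
      · have hkn : u + (k - single j 1) = n := by
          rw [← add_tsub_assoc_of_le (single_le_iff.2 (Nat.one_le_iff_ne_zero.2 hk)), hn,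
            add_tsub_cancel_right]
        rw [ih, hkn]
    rw [hfirst, hsecond, ← add_mul, ← Nat.cast_add, ← multiChoose_add_single, ← hn,
      coeff_mul_X', if_pos (Finsupp.mem_support_iff.2 hukj), hn, add_tsub_cancel_right]

lemma hasseDeriv_hasseDeriv (k l : Fin m →₀ ℕ) (f : MvPolynomial (Fin m) R) :
    hasseDeriv l (hasseDeriv k f) = C (multiChoose (k + l) k : R) * hasseDeriv (k + l) f := by
  ext u
  have hchoose : multiChoose (u + l) l * multiChoose (u + (k + l)) k
      = multiChoose (k + l) k * multiChoose (u + (k + l)) (k + l) := by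
    rw [mul_comm, mul_comm (multiChoose (k + l) k), multiChoose_mul_multiChoose,
      add_left_comm, add_tsub_cancel_left]
  rw [coeff_C_mul, coeff_hasseDeriv, coeff_hasseDeriv, coeff_hasseDeriv,
    add_assoc, add_comm l k, ← mul_assoc, ← mul_assoc, ← Nat.cast_mul, ← Nat.cast_mul,
    hchoose]

end hasseDeriv

section multiplicity

variable {R : Type*} [CommRing R] {m : ℕ}

lemma hasMultAtLeast_zero (f : MvPolynomial (Fin m) R) (a : Fin m → R) :
    HasMultAtLeast f a 0 :=
  fun _ h => absurd h (Nat.not_lt_zero _)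

-- `multAt` is `sSup`, which is `0` on an unbounded set of naturals.
lemma hasMultAtLeast_multAt (f : MvPolynomial (Fin m) R) (a : Fin m → R) :
    HasMultAtLeast f a (multAt f a) := by
  by_cases hbdd : BddAbove {r | HasMultAtLeast f a r}
  · exact Nat.sSup_mem ⟨0, hasMultAtLeast_zero f a⟩ hbdd
  · rw [multAt, csSup_of_not_bddAbove hbdd, csSup_empty]
    exact hasMultAtLeast_zero f a

lemma HasMultAtLeast.hasseDeriv {f : MvPolynomial (Fin m) R} {a : Fin m → R} {r : ℕ}
    (h : HasMultAtLeast f a r) (k : Fin m →₀ ℕ) :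
    HasMultAtLeast (hasseDeriv k f) a (r - ∑ j, k j) := by
  intro l hl
  have hkl : ∑ j, (k + l) j < r := by
    simp only [Finsupp.add_apply, Finset.sum_add_distrib]
    omega
  rw [hasseDeriv_hasseDeriv, eval_mul, eval_C, h (k + l) hkl, mul_zero]

end multiplicity

theorem hasseDeriv_multAt_ge_general {F : Type*} [Field F] {m : ℕ}
    (f : MvPolynomial (Fin m) F) (a : Fin m → F) (r : ℕ)
    (hmult : multAt f a = r) (k : Fin m →₀ ℕ) :
    HasMultAtLeast (hasseDeriv k f) a (r - ∑ j, k j) := by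
  subst hmult
  exact (hasMultAtLeast_multAt f a).hasseDeriv k

/-- If `f` is nonzero with multiplicity exactly `r` at `a`, then for any
multi-index `k`, the Hasse derivative `f^{(k)}` has multiplicity at least
`r − (k_1 + ⋯ + k_m)` at `a`. -/
theorem hasseDeriv_multAt_ge {F : Type*} [Field F] {m : ℕ}
    (f : MvPolynomial (Fin m) F) (hf : f ≠ 0) (a : Fin m → F) (r : ℕ)
    (hmult : multAt f a = r) (k : Fin m →₀ ℕ) :
    HasMultAtLeast (hasseDeriv k f) a (r - ∑ j, k j) :=
  hasseDeriv_multAt_ge_general f a r hmult k
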